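/- arXiv:1409.7610 — 8 statements merged into one kernel-verified Lean document; each statement's English description precedes it below -/
import Mathlib

section
/- Let T : U → U be a bounded linear operator on a Hilbert space U and u† ∈ U. Then u† ∈ Range(T*) if and only if there exists a constant C > 0 such that ⟨u†, v⟩ ≤ C ‖Tv‖ for all v ∈ U. -/
/-!
Testing the hypothesis against `±v` gives `|⟨u†, v⟩| ≤ C ‖T v‖`, so `T v ↦ ⟨u†, v⟩` is a
well-defined bounded functional on the range of `T`. Hahn–Banach extends it to all of `U`, and
its Riesz representative `w` satisfies `⟨w, T v⟩ = ⟨u†, v⟩` for all `v`, i.e. `T* w = u†`. Conversely `⟨T* w, v⟩ = ⟨w, T v⟩ ≤ ‖w‖ ‖T v‖`.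
-/

theorem LinearMap.exists_comp_rangeRestrict_eq_of_ker_le {R M M₂ M₃ : Type*} [Ring R]
    [AddCommGroup M] [Module R M] [AddCommGroup M₂] [Module R M₂] [AddCommGroup M₃] [Module R M₃]
    (f : M →ₗ[R] M₂) (g : M →ₗ[R] M₃) (h : LinearMap.ker f ≤ LinearMap.ker g) :
    ∃ ψ : LinearMap.range f →ₗ[R] M₃, ψ ∘ₗ f.rangeRestrict = g := by
  refine ⟨(LinearMap.ker f).liftQ g h ∘ₗ f.quotKerEquivRange.symm, LinearMap.ext fun x => ?_⟩
  change (LinearMap.ker f).liftQ g h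
    (f.quotKerEquivRange.symm ⟨f x, LinearMap.mem_range_self f x⟩) = g x
  rw [f.quotKerEquivRange_symm_apply_image]
  rfl

theorem exists_strongDual_comp_eq_of_norm_le {𝕜 E F : Type*} [RCLike 𝕜] [AddCommGroup E]
    [Module 𝕜 E] [NormedAddCommGroup F] [NormedSpace 𝕜 F] (T : E →ₗ[𝕜] F) (φ : E →ₗ[𝕜] 𝕜)
    (C : ℝ) (hφ : ∀ v, ‖φ v‖ ≤ C * ‖T v‖) :
    ∃ g : StrongDual 𝕜 F, ∀ v, g (T v) = φ v := by
  have hker : LinearMap.ker T ≤ LinearMap.ker φ := fun v hv => by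
    simpa [LinearMap.mem_ker.mp hv] using hφ v
  obtain ⟨ψ, hψ⟩ := T.exists_comp_rangeRestrict_eq_of_ker_le φ hker
  have hψ_bound : ∀ x, ‖ψ x‖ ≤ C * ‖x‖ := by
    intro x
    obtain ⟨v, rfl⟩ := T.surjective_rangeRestrict x
    simpa [← hψ] using hφ v
  obtain ⟨g, hg, -⟩ := exists_extension_norm_eq _ (ψ.mkContinuous C hψ_bound)
  exact ⟨g, fun v => (hg (T.rangeRestrict v)).trans (LinearMap.congr_fun hψ v)⟩

/-- Let `T : U → U` be a bounded linear operator on a real Hilbert space `U`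
and `u† ∈ U`. Then `u† ∈ Range(T*)` iff there exists `C > 0` with `⟨u†, v⟩ ≤ C ‖Tv‖` for all
`v ∈ U`. -/
theorem stmt3 {U : Type*} [NormedAddCommGroup U] [InnerProductSpace ℝ U] [CompleteSpace U]
    (T : U →L[ℝ] U) (udag : U) :
    (∃ w : U, ContinuousLinearMap.adjoint T w = udag) ↔
      ∃ C : ℝ, 0 < C ∧ ∀ v : U, (inner ℝ udag v : ℝ) ≤ C * ‖T v‖ := by
  constructor
  · rintro ⟨w, rfl⟩
    refine ⟨‖w‖ + 1, by positivity, fun v => ?_⟩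
    calc inner ℝ (ContinuousLinearMap.adjoint T w) v = inner ℝ w (T v) :=
          ContinuousLinearMap.adjoint_inner_left T v w
      _ ≤ ‖w‖ * ‖T v‖ := real_inner_le_norm w (T v)
      _ ≤ (‖w‖ + 1) * ‖T v‖ := by gcongr; linarith
  · rintro ⟨C, -, hC⟩
    have habs : ∀ v, ‖innerSL ℝ udag v‖ ≤ C * ‖T v‖ := fun v => by
      have hneg : -inner ℝ udag v ≤ C * ‖T v‖ := by simpa using hC (-v)
      simpa [abs_le] using ⟨by linarith, hC v⟩
    obtain ⟨g, hg⟩ := exists_strongDual_comp_eq_of_norm_le (T : U →ₗ[ℝ] U) _ C habs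
    refine ⟨(InnerProductSpace.toDual ℝ U).symm g, ext_inner_right ℝ fun v => ?_⟩
    rw [ContinuousLinearMap.adjoint_inner_left, InnerProductSpace.toDual_symm_apply]
    exact hg v
end

section
/- If there exist ν ∈ (0,1] and β ≥ 0 such that 2⟨u†,u⟩ ≤ β ‖Lu‖^ν ‖u‖^(1-ν) for every u ∈ U, then 2⟨u†,u⟩ ≤ β ‖L*Lu‖^(ν/2) ‖u‖^(1-ν/2) for every u ∈ U. -/
/-!
Since `‖Lu‖² = ⟨L*Lu, u⟩ ≤ ‖L*Lu‖ ‖u‖` by Cauchy–Schwarz, raising to the power `ν/2` gives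
`‖Lu‖^ν ‖u‖^(1-ν) ≤ ‖L*Lu‖^(ν/2) ‖u‖^(1-ν/2)`, and the hypothesis does the rest.
-/

open ContinuousLinearMap

theorem ContinuousLinearMap.norm_apply_sq_le_norm_adjoint_apply_mul_norm {𝕜 E F : Type*}
    [RCLike 𝕜] [NormedAddCommGroup E] [InnerProductSpace 𝕜 E] [CompleteSpace E]
    [NormedAddCommGroup F] [InnerProductSpace 𝕜 F] [CompleteSpace F] (A : E →L[𝕜] F) (x : E) :
    ‖A x‖ ^ 2 ≤ ‖adjoint A (A x)‖ * ‖x‖ := by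
  rw [apply_norm_sq_eq_inner_adjoint_left]
  exact (RCLike.re_le_norm _).trans (norm_inner_le_norm _ _)

theorem Real.rpow_mul_rpow_one_sub_le_of_sq_le_mul {a b c ν : ℝ} (ha : 0 ≤ a) (hc : 0 < c)
    (hν : 0 ≤ ν) (h : a ^ 2 ≤ b * c) :
    a ^ ν * c ^ (1 - ν) ≤ b ^ (ν / 2) * c ^ (1 - ν / 2) := by
  have hb : 0 ≤ b := nonneg_of_mul_nonneg_left ((sq_nonneg a).trans h) hc
  calc a ^ ν * c ^ (1 - ν) = (a ^ 2) ^ (ν / 2) * c ^ (1 - ν) := by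
        rw [← Real.rpow_natCast, ← Real.rpow_mul ha]; ring_nf
    _ ≤ (b * c) ^ (ν / 2) * c ^ (1 - ν) := by gcongr
    _ = b ^ (ν / 2) * c ^ (1 - ν / 2) := by
        rw [Real.mul_rpow hb hc.le, mul_assoc, ← Real.rpow_add hc]; ring_nf

theorem stmt4_general {U V : Type*} [NormedAddCommGroup U] [InnerProductSpace ℝ U] [CompleteSpace U]
    [NormedAddCommGroup V] [InnerProductSpace ℝ V] [CompleteSpace V]
    (L : U →L[ℝ] V) (udag : U) (ν β : ℝ) (hν0 : 0 < ν) (hβ : 0 ≤ β)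
    (h : ∀ u : U, 2 * (inner ℝ udag u : ℝ) ≤ β * ‖L u‖ ^ ν * ‖u‖ ^ (1 - ν)) :
    ∀ u : U, 2 * (inner ℝ udag u : ℝ) ≤
      β * ‖ContinuousLinearMap.adjoint L (L u)‖ ^ (ν / 2) * ‖u‖ ^ (1 - ν / 2) := by
  intro u
  rcases eq_or_ne u 0 with rfl | hu
  · rw [inner_zero_right, mul_zero]
    positivity
  calc 2 * (inner ℝ udag u : ℝ)
    _ ≤ β * (‖L u‖ ^ ν * ‖u‖ ^ (1 - ν)) := (h u).trans_eq (mul_assoc ..)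
    _ ≤ β * (‖adjoint L (L u)‖ ^ (ν / 2) * ‖u‖ ^ (1 - ν / 2)) :=
        mul_le_mul_of_nonneg_left (Real.rpow_mul_rpow_one_sub_le_of_sq_le_mul (norm_nonneg _)
          (norm_pos_iff.mpr hu) hν0.le (L.norm_apply_sq_le_norm_adjoint_apply_mul_norm u)) hβ
    _ = _ := (mul_assoc ..).symm

/-- If there exist `ν ∈ (0,1]` and `β ≥ 0` such that
`2⟨u†,u⟩ ≤ β ‖Lu‖^ν ‖u‖^(1-ν)` for every `u ∈ U`, then
`2⟨u†,u⟩ ≤ β ‖L*Lu‖^(ν/2) ‖u‖^(1-ν/2)` for every `u ∈ U`. -/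
theorem stmt4 {U V : Type*} [NormedAddCommGroup U] [InnerProductSpace ℝ U] [CompleteSpace U]
    [NormedAddCommGroup V] [InnerProductSpace ℝ V] [CompleteSpace V]
    (L : U →L[ℝ] V) (udag : U) (ν β : ℝ) (hν0 : 0 < ν) (hν1 : ν ≤ 1) (hβ : 0 ≤ β)
    (h : ∀ u : U, 2 * (inner ℝ udag u : ℝ) ≤ β * ‖L u‖ ^ ν * ‖u‖ ^ (1 - ν)) :
    ∀ u : U, 2 * (inner ℝ udag u : ℝ) ≤
      β * ‖ContinuousLinearMap.adjoint L (L u)‖ ^ (ν / 2) * ‖u‖ ^ (1 - ν / 2) :=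
  stmt4_general L udag ν β hν0 hβ h
end

section
/- There exists β ≥ 0 such that ⟨u†,u⟩ ≤ β ‖L*Lu‖ for all u ∈ U if and only if u† ∈ Range(L*L). -/
/-!
Since `L*L` is self-adjoint, the claim is the case `T = L*L` of the range criterion
`y ∈ Range(T*) ↔ ∃ β, ∀ u, |⟨y, u⟩| ≤ β ‖T u‖`. One direction is Cauchy–Schwarz. For the
other, the bound makes `T u ↦ ⟨y, u⟩` a well-defined bounded functional on `Range(T)`;
Hahn–Banach extends it to the whole space and the Riesz representative `w` of the extension
satisfies `⟨T* w, u⟩ = ⟨w, T u⟩ = ⟨y, u⟩` for all `u`, i.e. `T* w = y`.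
-/

open ContinuousLinearMap

theorem LinearMap.exists_strongDual_comp_eq_of_norm_le {𝕜 E F : Type*}
    [NontriviallyNormedField 𝕜] [IsRCLikeNormedField 𝕜] [AddCommGroup E] [Module 𝕜 E]
    [SeminormedAddCommGroup F] [NormedSpace 𝕜 F] (T : E →ₗ[𝕜] F) (f : E →ₗ[𝕜] 𝕜) (β : ℝ)
    (hf : ∀ u, ‖f u‖ ≤ β * ‖T u‖) : ∃ G : StrongDual 𝕜 F, ∀ u, G (T u) = f u := by
  have hker : LinearMap.ker T ≤ LinearMap.ker f := fun u hu => by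
    simpa [LinearMap.mem_ker.mp hu] using hf u
  let f₀ : LinearMap.range T →ₗ[𝕜] 𝕜 :=
    (LinearMap.ker T).liftQ f hker ∘ₗ T.quotKerEquivRange.symm.toLinearMap
  have hf₀ : ∀ u, f₀ ⟨T u, LinearMap.mem_range_self T u⟩ = f u := fun u => by
    simp [f₀]
  have hf₀_le : ∀ v, ‖f₀ v‖ ≤ β * ‖v‖ := by
    rintro ⟨-, u, rfl⟩
    rw [hf₀]
    exact hf u
  obtain ⟨G, hG, -⟩ := exists_extension_norm_eq (LinearMap.range T) (f₀.mkContinuous β hf₀_le)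
  exact ⟨G, fun u => (hG ⟨T u, LinearMap.mem_range_self T u⟩).trans (hf₀ u)⟩

section Adjoint

variable {𝕜 E F : Type*} [RCLike 𝕜] [NormedAddCommGroup E] [InnerProductSpace 𝕜 E]
  [CompleteSpace E] [NormedAddCommGroup F] [InnerProductSpace 𝕜 F] [CompleteSpace F]

theorem ContinuousLinearMap.norm_inner_adjoint_apply_le (T : E →L[𝕜] F) (w : F) (u : E) :
    ‖inner 𝕜 (adjoint T w) u‖ ≤ ‖w‖ * ‖T u‖ := by
  rw [adjoint_inner_left]
  exact norm_inner_le_norm w (T u)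

theorem ContinuousLinearMap.exists_adjoint_apply_eq_of_norm_inner_le (T : E →L[𝕜] F) (y : E)
    (β : ℝ) (hy : ∀ u, ‖inner 𝕜 y u‖ ≤ β * ‖T u‖) : ∃ w, adjoint T w = y := by
  obtain ⟨G, hG⟩ := (T : E →ₗ[𝕜] F).exists_strongDual_comp_eq_of_norm_le
    (innerₛₗ 𝕜 y) β hy
  refine ⟨(InnerProductSpace.toDual 𝕜 F).symm G, ext_inner_right 𝕜 fun u => ?_⟩
  rw [adjoint_inner_left, InnerProductSpace.toDual_symm_apply]
  exact hG u

end Adjoint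

/-- There exists `β ≥ 0` such that `⟨u†,u⟩ ≤ β ‖L*Lu‖` for all `u ∈ U`
iff `u† ∈ Range(L*L)`. -/
theorem stmt5 {U V : Type*} [NormedAddCommGroup U] [InnerProductSpace ℝ U] [CompleteSpace U]
    [NormedAddCommGroup V] [InnerProductSpace ℝ V] [CompleteSpace V]
    (L : U →L[ℝ] V) (udag : U) :
    (∃ β : ℝ, 0 ≤ β ∧ ∀ u : U,
        (inner ℝ udag u : ℝ) ≤ β * ‖ContinuousLinearMap.adjoint L (L u)‖) ↔
      ∃ w : U, ContinuousLinearMap.adjoint L (L w) = udag := by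
  have hself : adjoint (adjoint L ∘L L) = adjoint L ∘L L := by
    rw [adjoint_comp, adjoint_adjoint]
  constructor
  · rintro ⟨β, -, hβ⟩
    have habs : ∀ u, ‖inner ℝ udag u‖ ≤ β * ‖(adjoint L ∘L L) u‖ := fun u =>
      abs_le.mpr ⟨neg_le.mpr (by simpa using hβ (-u)), hβ u⟩
    simpa [hself] using (adjoint L ∘L L).exists_adjoint_apply_eq_of_norm_inner_le udag β habs
  · rintro ⟨w, rfl⟩
    refine ⟨‖w‖, norm_nonneg w, fun u => ?_⟩
    have := (adjoint L ∘L L).norm_inner_adjoint_apply_le w u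
    rw [hself] at this
    exact (le_abs_self _).trans this
end

section
/- Let U be a separable real Hilbert space with orthonormal basis (φₙ)ₙ≥1, L : U → U the diagonal operator L φₙ = 2^(−n) φₙ, and u† = Σₙ 2^(−n/2) φₙ. Then for every u ∈ U, ⟨u†, u⟩ ≤ 2√2 · ‖u‖^(1/2) ‖Lu‖^(1/2). -/
/-!
In the coordinates `γₙ = ⟪φₙ, u⟫` the pairing is `∑ 2^(-(n+1)/2) γₙ`. Split it at an index `N`:
Cauchy–Schwarz against the coefficients `2^(-(n+1)) γₙ` of `L u` bounds the head by
`√(2^(N+1)) ‖L u‖`, and Cauchy–Schwarz against `γ` bounds the tail by `2^(-N/2) ‖u‖`. Choosing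
`2^N ≤ ‖u‖ / ‖L u‖ < 2^(N+1)` makes both bounds at most `√2 · √‖u‖ · √‖L u‖`.
-/

open Finset Real

theorem Real.tsum_mul_le_sqrt_mul_sqrt {ι : Type*} {f g : ι → ℝ}
    (hf : Summable fun i => f i ^ 2) (hg : Summable fun i => g i ^ 2) :
    ∑' i, f i * g i ≤ √(∑' i, f i ^ 2) * √(∑' i, g i ^ 2) := by
  have hfg : Summable fun i => f i * g i :=
    ((hf.add hg).div_const 2).of_norm_bounded fun i => by
      rw [Real.norm_eq_abs, abs_mul]
      nlinarith [sq_nonneg (|f i| - |g i|), sq_abs (f i), sq_abs (g i)]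
  refine hfg.tsum_le_of_sum_le fun s => (Real.sum_mul_le_sqrt_mul_sqrt s f g).trans ?_
  gcongr
  · exact hf.sum_le_tsum s fun _ _ => sq_nonneg _
  · exact hg.sum_le_tsum s fun _ _ => sq_nonneg _

theorem hasSum_mul_le_of_split {c d γ : ℕ → ℝ} {S A B T : ℝ} (N : ℕ) (hd : ∀ n, d n ≠ 0)
    (hA0 : 0 ≤ A) (hB0 : 0 ≤ B) (hS : HasSum (fun n => c n * γ n) S)
    (hA : HasSum (fun n => (d n * γ n) ^ 2) (A ^ 2)) (hB : HasSum (fun n => γ n ^ 2) (B ^ 2))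
    (hT : HasSum (fun n => c (n + N) ^ 2) T) :
    S ≤ √(∑ n ∈ range N, (c n / d n) ^ 2) * A + √T * B := by
  rw [← hS.tsum_eq, ← hS.summable.sum_add_tsum_nat_add N]
  gcongr
  · calc ∑ n ∈ range N, c n * γ n = ∑ n ∈ range N, c n / d n * (d n * γ n) := by
          refine sum_congr rfl fun n _ => ?_
          field_simp [hd n]
      _ ≤ √(∑ n ∈ range N, (c n / d n) ^ 2) * √(∑ n ∈ range N, (d n * γ n) ^ 2) :=
          Real.sum_mul_le_sqrt_mul_sqrt _ _ _
      _ ≤ √(∑ n ∈ range N, (c n / d n) ^ 2) * A := by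
          gcongr
          exact (Real.sqrt_le_left hA0).2 (sum_le_hasSum _ (fun _ _ => sq_nonneg _) hA)
  · have hγ : Summable fun n => γ (n + N) ^ 2 := (summable_nat_add_iff N).2 hB.summable
    calc ∑' n, c (n + N) * γ (n + N) ≤ √(∑' n, c (n + N) ^ 2) * √(∑' n, γ (n + N) ^ 2) :=
          Real.tsum_mul_le_sqrt_mul_sqrt hT.summable hγ
      _ ≤ √T * B := by
          rw [hT.tsum_eq]
          gcongr
          refine (Real.sqrt_le_left hB0).2 (hB.tsum_eq ▸ ?_)
          exact hγ.tsum_le_tsum_of_inj (· + N) (add_left_injective N)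
            (fun _ _ => sq_nonneg _) (fun _ => le_rfl) hB.summable

theorem sqrt_mul_add_sqrt_inv_mul_le {A B t : ℝ} (hA : 0 ≤ A) (ht : 0 < t) (hAt : A * t ≤ B)
    (hBt : B ≤ 2 * t * A) : √(2 * t) * A + √t⁻¹ * B ≤ 2 * √2 * √B * √A := by
  have hB : 0 ≤ B := (mul_nonneg hA ht.le).trans hAt
  have hAB : √(2 * B * A) = √2 * √B * √A := by
    rw [Real.sqrt_mul (by positivity), Real.sqrt_mul (by norm_num)]
  have head : √(2 * t) * A ≤ √(2 * B * A) := by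
    rw [← Real.sqrt_sq hA, ← Real.sqrt_mul' _ (sq_nonneg _), Real.sqrt_sq hA]
    exact Real.sqrt_le_sqrt (by nlinarith)
  have tail : √t⁻¹ * B ≤ √(2 * B * A) := by
    rw [← Real.sqrt_sq hB, ← Real.sqrt_mul' _ (sq_nonneg _), Real.sqrt_sq hB]
    refine Real.sqrt_le_sqrt ?_
    rw [← div_eq_inv_mul, div_le_iff₀ ht]
    nlinarith
  linarith

theorem hasSum_mul_le_of_dyadic {c γ : ℕ → ℝ} {S A B : ℝ} (hc : ∀ n, c n ^ 2 = (2 ^ (n + 1))⁻¹)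
    (hA0 : 0 ≤ A) (hB0 : 0 ≤ B) (hS : HasSum (fun n => c n * γ n) S)
    (hA : HasSum (fun n => ((2 ^ (n + 1))⁻¹ * γ n) ^ 2) (A ^ 2))
    (hB : HasSum (fun n => γ n ^ 2) (B ^ 2)) :
    S ≤ 2 * √2 * √B * √A := by
  rcases hA0.eq_or_lt with rfl | hApos
  · have hγ : ∀ n, γ n = 0 := fun n => by
      have h := congrFun ((hasSum_zero_iff_of_nonneg fun _ => sq_nonneg _).1
        (by simpa using hA)) n
      simpa using h
    rw [hS.unique (by simp only [hγ, mul_zero]; exact hasSum_zero)]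
    positivity
  -- `1 ≤ B / A`, so the dyadic scale `2 ^ N` of `B / A` has a natural exponent
  have hAB : A ≤ B := by
    refine (pow_le_pow_iff_left₀ hA0 hB0 two_ne_zero).1 (hasSum_le (fun n => ?_) hA hB)
    rw [mul_pow]
    refine mul_le_of_le_one_left (sq_nonneg _) (pow_le_one₀ (by positivity) ?_)
    exact inv_le_one_of_one_le₀ (one_le_pow₀ one_le_two)
  obtain ⟨N, hN, hN'⟩ := exists_nat_pow_near ((one_le_div hApos).2 hAB) one_lt_two
  have head : ∑ n ∈ range N, (c n / (2 ^ (n + 1))⁻¹) ^ 2 ≤ 2 * 2 ^ N := by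
    have h : ∀ n, (c n / (2 ^ (n + 1))⁻¹) ^ 2 = 2 * 2 ^ n := fun n => by
      rw [div_pow, hc]; field_simp; ring
    simp only [h, ← mul_sum, geom_sum_eq (by norm_num : (2:ℝ) ≠ 1)]
    norm_num
  have tail : HasSum (fun n => c (n + N) ^ 2) (2 ^ N)⁻¹ := by
    convert hasSum_geometric_two' ((2:ℝ) ^ N)⁻¹ using 2 with n
    rw [hc]
    ring
  calc S ≤ √(∑ n ∈ range N, (c n / (2 ^ (n + 1))⁻¹) ^ 2) * A + √(2 ^ N)⁻¹ * B :=
        hasSum_mul_le_of_split N (fun n => by positivity) hA0 hB0 hS hA hB tail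
    _ ≤ √(2 * 2 ^ N) * A + √(2 ^ N)⁻¹ * B := by gcongr
    _ ≤ 2 * √2 * √B * √A := by
        refine sqrt_mul_add_sqrt_inv_mul_le hA0 (by positivity) ?_ ?_
        · rw [le_div_iff₀ hApos] at hN; linarith
        · rw [div_lt_iff₀ hApos, pow_succ] at hN'; linarith

theorem HilbertBasis.inner_apply_of_apply_eq_smul {ι 𝕜 E : Type*} [RCLike 𝕜]
    [NormedAddCommGroup E] [InnerProductSpace 𝕜 E] (b : HilbertBasis ι 𝕜 E) {T : E →L[𝕜] E}
    {μ : ι → 𝕜} (hT : ∀ i, T (b i) = μ i • b i) (x : E) (i : ι) :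
    inner 𝕜 (b i) (T x) = μ i * inner 𝕜 (b i) x := by
  have h := ((b.hasSum_repr x).mapL T).mapL (innerSL 𝕜 (b i))
  have hi := h.unique (hasSum_single i fun j hj => ?_)
  · simpa [hT, inner_smul_right, b.repr_apply_apply, b.orthonormal.1 i, mul_comm] using hi
  · simp [hT, b.orthonormal.inner_eq_zero hj.symm]

theorem HilbertBasis.hasSum_sq_inner {ι E : Type*} [NormedAddCommGroup E]
    [InnerProductSpace ℝ E] (b : HilbertBasis ι ℝ E) (x : E) :
    HasSum (fun i => inner ℝ (b i) x ^ 2) (‖x‖ ^ 2) := by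
  simpa [sq, real_inner_comm, real_inner_self_eq_norm_sq] using b.hasSum_inner_mul_inner x x

theorem two_rpow_neg_natCast_add_one (n : ℕ) : (2 : ℝ) ^ (-((n : ℝ) + 1)) = (2 ^ (n + 1))⁻¹ := by
  rw [Real.rpow_neg zero_le_two, ← Nat.cast_add_one, Real.rpow_natCast]

theorem stmt10_general {U : Type*} [NormedAddCommGroup U] [InnerProductSpace ℝ U]
    (φ : HilbertBasis ℕ ℝ U) (L : U →L[ℝ] U)
    (hL : ∀ n : ℕ, L (φ n) = ((2 : ℝ) ^ (-((n : ℝ) + 1))) • φ n)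
    (udag : U)
    (hu : HasSum (fun n : ℕ => ((2 : ℝ) ^ (-((n : ℝ) + 1) / 2)) • φ n) udag) :
    ∀ u : U, (inner ℝ udag u : ℝ) ≤
      2 * Real.sqrt 2 * ‖u‖ ^ ((1 : ℝ) / 2) * ‖L u‖ ^ ((1 : ℝ) / 2) := by
  intro u
  have hc (n : ℕ) : ((2 : ℝ) ^ (-((n : ℝ) + 1) / 2)) ^ 2 = (2 ^ (n + 1))⁻¹ := by
    rw [← Real.rpow_natCast, ← Real.rpow_mul zero_le_two, ← two_rpow_neg_natCast_add_one]
    norm_num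
  have hS : HasSum (fun n : ℕ => (2 : ℝ) ^ (-((n : ℝ) + 1) / 2) * inner ℝ (φ n) u)
      (inner ℝ udag u) := by
    simpa [real_inner_smul_right, real_inner_comm u] using hu.mapL (innerSL ℝ u)
  have hA : HasSum (fun n => ((2 ^ (n + 1))⁻¹ * inner ℝ (φ n) u) ^ 2) (‖L u‖ ^ 2) := by
    convert φ.hasSum_sq_inner (L u) using 3 with n
    rw [φ.inner_apply_of_apply_eq_smul hL, two_rpow_neg_natCast_add_one]
  rw [← Real.sqrt_eq_rpow, ← Real.sqrt_eq_rpow]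
  exact hasSum_mul_le_of_dyadic hc (norm_nonneg _) (norm_nonneg _) hS hA (φ.hasSum_sq_inner u)

/-- Let `U` be a separable real Hilbert space with orthonormal basis
`(φₙ)ₙ≥1`, `L : U → U` the diagonal operator `L φₙ = 2^(−n) φₙ`, and `u† = Σₙ 2^(−n/2) φₙ`.
Then for every `u ∈ U`, `⟨u†, u⟩ ≤ 2√2 ‖u‖^(1/2) ‖Lu‖^(1/2)`.
(Lean index `n : ℕ` corresponds to the paper's `n + 1 ≥ 1`.) -/
theorem stmt10 {U : Type*} [NormedAddCommGroup U] [InnerProductSpace ℝ U] [CompleteSpace U]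
    (φ : HilbertBasis ℕ ℝ U) (L : U →L[ℝ] U)
    (hL : ∀ n : ℕ, L (φ n) = ((2 : ℝ) ^ (-((n : ℝ) + 1))) • φ n)
    (udag : U)
    (hu : HasSum (fun n : ℕ => ((2 : ℝ) ^ (-((n : ℝ) + 1) / 2)) • φ n) udag) :
    ∀ u : U, (inner ℝ udag u : ℝ) ≤
      2 * Real.sqrt 2 * ‖u‖ ^ ((1 : ℝ) / 2) * ‖L u‖ ^ ((1 : ℝ) / 2) :=
  stmt10_general φ L hL udag hu
end

section
/- Assume u† satisfies 2⟨u†,u⟩ ≤ β ‖Lu‖^μ + γ ‖u‖² for all u ∈ U, with μ ∈ (0,1], β ≥ 0, γ ∈ (0,1). Let y = L u†, δ > 0, y^δ ∈ V with ‖y^δ − y‖ ≤ δ, and for α > 0 let u_α^δ be the minimizer over u ∈ U of ‖Lu − y^δ‖² + α‖u‖². Then ‖u_α^δ − u†‖² ≤ (2/(1−γ)) δ²/α + (β^(2/(2−μ)) (2−μ)/(2(1−γ))) α^(μ/(2−μ)). -/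
/-!
Expanding `‖u_α^δ - u†‖²` and inserting the minimality of `u_α^δ` tested against `u†` leaves the
term `2⟨u†, u† - u_α^δ⟩`, which the source condition bounds by `β ‖L(u† - u_α^δ)‖^μ` plus a
fraction `γ` of `‖u_α^δ - u†‖²`. The residual `‖L(u† - u_α^δ)‖` is at most `δ + ‖Lu_α^δ - y^δ‖`,
and Young's inequality with exponents `2/μ`, `2/(2-μ)` trades `αβ (δ + ‖Lu_α^δ - y^δ‖)^μ` for
a quadratic term, absorbed by `δ²` and the residual gained from minimality, plus
`(2-μ)/2 (αβ)^(2/(2-μ))`.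
-/

open Real

lemma Real.mul_rpow_le_young_sq {x b μ : ℝ} (hx : 0 ≤ x) (hb : 0 ≤ b) (hμ0 : 0 < μ)
    (hμ2 : μ < 2) :
    b * x ^ μ ≤ μ / 2 * x ^ 2 + (2 - μ) / 2 * b ^ (2 / (2 - μ)) := by
  have hpq : HolderConjugate (2 / μ) (2 / (2 - μ)) :=
    ⟨by rw [inv_div, inv_div]; ring, by positivity, by bound⟩
  have hx2 : (x ^ μ) ^ (2 / μ) = x ^ 2 := by
    rw [← rpow_mul hx, mul_div_cancel₀ _ hμ0.ne', rpow_two]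
  calc b * x ^ μ = x ^ μ * b := mul_comm _ _
    _ ≤ (x ^ μ) ^ (2 / μ) / (2 / μ) + b ^ (2 / (2 - μ)) / (2 / (2 - μ)) :=
      young_inequality_of_nonneg (by positivity) hb hpq
    _ = μ / 2 * x ^ 2 + (2 - μ) / 2 * b ^ (2 / (2 - μ)) := by
      rw [hx2, div_div_eq_mul_div, div_div_eq_mul_div]; ring

section Tikhonov

variable {U V : Type*} [NormedAddCommGroup U] [InnerProductSpace ℝ U]
  [NormedAddCommGroup V] [InnerProductSpace ℝ V]

lemma norm_sub_sq_eq_add_two_inner (u v : U) :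
    ‖u - v‖ ^ 2 = ‖u‖ ^ 2 - ‖v‖ ^ 2 + 2 * inner ℝ v (v - u) := by
  rw [norm_sub_sq_real, inner_sub_right, real_inner_self_eq_norm_sq, real_inner_comm v u]
  ring

lemma tikhonov_minimality_le {L : U →L[ℝ] V} {udag uad : U} {yδ : V} {δ α : ℝ}
    (hyδ : ‖yδ - L udag‖ ≤ δ)
    (hmin : ∀ u : U, ‖L uad - yδ‖ ^ 2 + α * ‖uad‖ ^ 2 ≤ ‖L u - yδ‖ ^ 2 + α * ‖u‖ ^ 2) :
    ‖L uad - yδ‖ ^ 2 + α * ‖uad‖ ^ 2 ≤ δ ^ 2 + α * ‖udag‖ ^ 2 := by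
  have h : ‖L udag - yδ‖ ^ 2 ≤ δ ^ 2 := by
    rw [norm_sub_rev]; exact pow_le_pow_left₀ (norm_nonneg _) hyδ 2
  linarith [hmin udag]

lemma norm_map_sub_le_add_residual (L : U →L[ℝ] V) (udag uad : U) (yδ : V) {δ : ℝ}
    (hyδ : ‖yδ - L udag‖ ≤ δ) :
    ‖L (udag - uad)‖ ≤ δ + ‖L uad - yδ‖ := by
  calc ‖L (udag - uad)‖ = ‖(L udag - yδ) - (L uad - yδ)‖ := by
        rw [map_sub, sub_sub_sub_cancel_right]
    _ ≤ ‖L udag - yδ‖ + ‖L uad - yδ‖ := norm_sub_le _ _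
    _ ≤ δ + ‖L uad - yδ‖ := by rw [norm_sub_rev]; gcongr

lemma tikhonov_error_mul_le {L : U →L[ℝ] V} {udag uad : U} {yδ : V} {μ β γ δ α : ℝ}
    (hμ0 : 0 < μ) (hμ1 : μ ≤ 1) (hβ : 0 ≤ β) (hα : 0 < α)
    (hvi : ∀ u : U, 2 * (inner ℝ udag u : ℝ) ≤ β * ‖L u‖ ^ μ + γ * ‖u‖ ^ 2)
    (hyδ : ‖yδ - L udag‖ ≤ δ)
    (hmin : ∀ u : U, ‖L uad - yδ‖ ^ 2 + α * ‖uad‖ ^ 2 ≤ ‖L u - yδ‖ ^ 2 + α * ‖u‖ ^ 2) :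
    (1 - γ) * α * ‖uad - udag‖ ^ 2 ≤ 2 * δ ^ 2 + (2 - μ) / 2 * (α * β) ^ (2 / (2 - μ)) := by
  set T := ‖L uad - yδ‖
  have hδ : 0 ≤ δ := (norm_nonneg _).trans hyδ
  have hT : 0 ≤ T := norm_nonneg _
  have hminimal := tikhonov_minimality_le hyδ hmin
  have hsource : 2 * inner ℝ udag (udag - uad) ≤ β * (δ + T) ^ μ + γ * ‖uad - udag‖ ^ 2 := by
    have hres : ‖L (udag - uad)‖ ^ μ ≤ (δ + T) ^ μ :=
      rpow_le_rpow (norm_nonneg _) (norm_map_sub_le_add_residual L udag uad yδ hyδ) hμ0.le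
    have := hvi (udag - uad)
    rw [norm_sub_rev udag uad] at this
    linarith [mul_le_mul_of_nonneg_left hres hβ]
  have hyoung := mul_rpow_le_young_sq (by positivity : 0 ≤ δ + T) (mul_nonneg hα.le hβ) hμ0
    (by linarith)
  have hquad : μ / 2 * (δ + T) ^ 2 ≤ δ ^ 2 + T ^ 2 := by
    nlinarith [sq_nonneg (δ - T), mul_nonneg hμ0.le (sq_nonneg (δ - T))]
  have hexpand := congrArg (α * ·) (norm_sub_sq_eq_add_two_inner uad udag)
  have hα_source := mul_le_mul_of_nonneg_left hsource hα.le
  linarith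

end Tikhonov

theorem stmt12_general {U V : Type*} [NormedAddCommGroup U] [InnerProductSpace ℝ U]
    [NormedAddCommGroup V] [InnerProductSpace ℝ V]
    (L : U →L[ℝ] V) (udag : U) (μ β γ : ℝ)
    (hμ0 : 0 < μ) (hμ1 : μ ≤ 1) (hβ : 0 ≤ β) (hγ1 : γ < 1)
    (hvi : ∀ u : U, 2 * (inner ℝ udag u : ℝ) ≤ β * ‖L u‖ ^ μ + γ * ‖u‖ ^ 2)
    (δ : ℝ) (yδ : V) (hyδ : ‖yδ - L udag‖ ≤ δ)
    (α : ℝ) (hα : 0 < α) (uad : U)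
    (hmin : ∀ u : U, ‖L uad - yδ‖ ^ 2 + α * ‖uad‖ ^ 2 ≤ ‖L u - yδ‖ ^ 2 + α * ‖u‖ ^ 2) :
    ‖uad - udag‖ ^ 2 ≤
      (2 / (1 - γ)) * (δ ^ 2 / α) +
        (β ^ (2 / (2 - μ)) * (2 - μ) / (2 * (1 - γ))) * α ^ (μ / (2 - μ)) := by
  have hγ : 0 < 1 - γ := sub_pos.mpr hγ1
  have hbound := tikhonov_error_mul_le hμ0 hμ1 hβ hα hvi hyδ hmin
  have hpow : (α * β) ^ (2 / (2 - μ)) = α * (β ^ (2 / (2 - μ)) * α ^ (μ / (2 - μ))) := by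
    have hexp : 2 / (2 - μ) = μ / (2 - μ) + 1 := by
      field_simp [(by linarith : 2 - μ ≠ 0)]; ring
    rw [mul_rpow hα.le hβ, hexp, rpow_add_one hα.ne']
    ring
  rw [hpow] at hbound
  calc ‖uad - udag‖ ^ 2 = (1 - γ) * α * ‖uad - udag‖ ^ 2 / ((1 - γ) * α) := by field_simp
    _ ≤ (2 * δ ^ 2 + (2 - μ) / 2 * (α * (β ^ (2 / (2 - μ)) * α ^ (μ / (2 - μ))))) /
        ((1 - γ) * α) := by gcongr
    _ = _ := by field_simp

/-- Assume `u†` satisfies `2⟨u†,u⟩ ≤ β ‖Lu‖^μ + γ ‖u‖²` for all `u ∈ U`,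
with `μ ∈ (0,1]`, `β ≥ 0`, `γ ∈ (0,1)`. Let `y = L u†`, `δ > 0`, `y^δ ∈ V` with
`‖y^δ − y‖ ≤ δ`, and for `α > 0` let `u_α^δ` minimize `‖Lu − y^δ‖² + α‖u‖²` over `u ∈ U`.
Then `‖u_α^δ − u†‖² ≤ (2/(1−γ)) δ²/α + (β^(2/(2−μ)) (2−μ)/(2(1−γ))) α^(μ/(2−μ))`. -/
theorem stmt12 {U V : Type*} [NormedAddCommGroup U] [InnerProductSpace ℝ U]
    [NormedAddCommGroup V] [InnerProductSpace ℝ V]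
    (L : U →L[ℝ] V) (udag : U) (μ β γ : ℝ)
    (hμ0 : 0 < μ) (hμ1 : μ ≤ 1) (hβ : 0 ≤ β) (hγ0 : 0 < γ) (hγ1 : γ < 1)
    (hvi : ∀ u : U, 2 * (inner ℝ udag u : ℝ) ≤ β * ‖L u‖ ^ μ + γ * ‖u‖ ^ 2)
    (δ : ℝ) (hδ : 0 < δ) (yδ : V) (hyδ : ‖yδ - L udag‖ ≤ δ)
    (α : ℝ) (hα : 0 < α) (uad : U)
    (hmin : ∀ u : U, ‖L uad - yδ‖ ^ 2 + α * ‖uad‖ ^ 2 ≤ ‖L u - yδ‖ ^ 2 + α * ‖u‖ ^ 2) :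
    ‖uad - udag‖ ^ 2 ≤
      (2 / (1 - γ)) * (δ ^ 2 / α) +
        (β ^ (2 / (2 - μ)) * (2 - μ) / (2 * (1 - γ))) * α ^ (μ / (2 - μ)) :=
  stmt12_general L udag μ β γ hμ0 hμ1 hβ hγ1 hvi δ yδ hyδ α hα uad hmin
end

section
/- Let u_α^δ be the Tikhonov minimizer for data y^δ with ‖y^δ − Lu†‖ ≤ δ, where u† satisfies 2⟨u†,u⟩ ≤ β‖Lu‖^μ + γ‖u‖² (μ ∈ (0,1], β ≥ 0, γ ∈ (0,1)). Then ‖Lu_α^δ − y^δ‖² + α‖u_α^δ − u†‖² ≤ δ² + αβ‖L(u_α^δ − u†)‖^μ + αγ‖u_α^δ − u†‖². -/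
/-!
Test the minimality of `uad` against `udag`. Expanding `‖uad‖² - ‖udag‖²` around `udag` turns the
penalty difference into `α‖uad - udag‖²` plus the cross term `2α⟪udag, udag - uad⟫`, which the
source condition controls, while the data error controls the residual at `udag`.
-/

theorem norm_sq_sub_norm_sq_eq_real {U : Type*} [NormedAddCommGroup U] [InnerProductSpace ℝ U]
    (x y : U) : ‖x‖ ^ 2 - ‖y‖ ^ 2 = ‖x - y‖ ^ 2 + 2 * inner ℝ y (x - y) := by
  rw [norm_sub_sq_real, inner_sub_right, real_inner_comm, real_inner_self_eq_norm_sq]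
  ring

theorem tikhonov_minimizer_comparison {U V : Type*} [NormedAddCommGroup U]
    [InnerProductSpace ℝ U] [NormedAddCommGroup V] [NormedSpace ℝ V] (L : U →L[ℝ] V) (y : V)
    (α : ℝ) (uad u : U)
    (hmin : ‖L uad - y‖ ^ 2 + α * ‖uad‖ ^ 2 ≤ ‖L u - y‖ ^ 2 + α * ‖u‖ ^ 2) :
    ‖L uad - y‖ ^ 2 + α * ‖uad - u‖ ^ 2 ≤
      ‖L u - y‖ ^ 2 + α * (2 * inner ℝ u (u - uad)) := by
  rw [← neg_sub uad u, inner_neg_right]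
  linear_combination hmin - α * norm_sq_sub_norm_sq_eq_real uad u

theorem stmt13_general {U V : Type*} [NormedAddCommGroup U] [InnerProductSpace ℝ U]
    [NormedAddCommGroup V] [InnerProductSpace ℝ V]
    (L : U →L[ℝ] V) (udag : U) (μ β γ : ℝ)
    (hvi : ∀ u : U, 2 * (inner ℝ udag u : ℝ) ≤ β * ‖L u‖ ^ μ + γ * ‖u‖ ^ 2)
    (δ : ℝ) (yδ : V) (hyδ : ‖yδ - L udag‖ ≤ δ)
    (α : ℝ) (hα : 0 < α) (uad : U)
    (hmin : ∀ u : U, ‖L uad - yδ‖ ^ 2 + α * ‖uad‖ ^ 2 ≤ ‖L u - yδ‖ ^ 2 + α * ‖u‖ ^ 2) :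
    ‖L uad - yδ‖ ^ 2 + α * ‖uad - udag‖ ^ 2 ≤
      δ ^ 2 + α * β * ‖L (uad - udag)‖ ^ μ + α * γ * ‖uad - udag‖ ^ 2 := by
  have hdata : ‖L udag - yδ‖ ^ 2 ≤ δ ^ 2 := by
    rw [norm_sub_rev]
    exact pow_le_pow_left₀ (norm_nonneg _) hyδ 2
  have hsource : 2 * inner ℝ udag (udag - uad) ≤
      β * ‖L (uad - udag)‖ ^ μ + γ * ‖uad - udag‖ ^ 2 := by
    simpa only [map_sub, norm_sub_rev] using hvi (udag - uad)
  calc ‖L uad - yδ‖ ^ 2 + α * ‖uad - udag‖ ^ 2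
      ≤ ‖L udag - yδ‖ ^ 2 + α * (2 * inner ℝ udag (udag - uad)) :=
        tikhonov_minimizer_comparison L yδ α uad udag (hmin udag)
    _ ≤ δ ^ 2 + α * (β * ‖L (uad - udag)‖ ^ μ + γ * ‖uad - udag‖ ^ 2) := by
        gcongr
    _ = δ ^ 2 + α * β * ‖L (uad - udag)‖ ^ μ + α * γ * ‖uad - udag‖ ^ 2 := by ring

/-- Let `u_α^δ` be the Tikhonov minimizer for data `y^δ` with
`‖y^δ − Lu†‖ ≤ δ`, where `u†` satisfies `2⟨u†,u⟩ ≤ β‖Lu‖^μ + γ‖u‖²`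
(`μ ∈ (0,1]`, `β ≥ 0`, `γ ∈ (0,1)`). Then
`‖Lu_α^δ − y^δ‖² + α‖u_α^δ − u†‖² ≤ δ² + αβ‖L(u_α^δ − u†)‖^μ + αγ‖u_α^δ − u†‖²`. -/
theorem stmt13 {U V : Type*} [NormedAddCommGroup U] [InnerProductSpace ℝ U]
    [NormedAddCommGroup V] [InnerProductSpace ℝ V]
    (L : U →L[ℝ] V) (udag : U) (μ β γ : ℝ)
    (hμ0 : 0 < μ) (hμ1 : μ ≤ 1) (hβ : 0 ≤ β) (hγ0 : 0 < γ) (hγ1 : γ < 1)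
    (hvi : ∀ u : U, 2 * (inner ℝ udag u : ℝ) ≤ β * ‖L u‖ ^ μ + γ * ‖u‖ ^ 2)
    (δ : ℝ) (hδ : 0 < δ) (yδ : V) (hyδ : ‖yδ - L udag‖ ≤ δ)
    (α : ℝ) (hα : 0 < α) (uad : U)
    (hmin : ∀ u : U, ‖L uad - yδ‖ ^ 2 + α * ‖uad‖ ^ 2 ≤ ‖L u - yδ‖ ^ 2 + α * ‖u‖ ^ 2) :
    ‖L uad - yδ‖ ^ 2 + α * ‖uad - udag‖ ^ 2 ≤
      δ ^ 2 + α * β * ‖L (uad - udag)‖ ^ μ + α * γ * ‖uad - udag‖ ^ 2 :=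
  stmt13_general L udag μ β γ hvi δ yδ hyδ α hα uad hmin
end

section
/- Under the inhomogeneous variational inequality with parameter μ = 2ν/(1+ν) for some ν ∈ (0,1] (i.e., 2⟨u†,u⟩ ≤ β‖Lu‖^μ + γ‖u‖² with γ ∈ (0,1)), there exists C > 0 such that for all δ > 0 and all ỹ ∈ V with ‖ỹ − Lu†‖ ≤ δ, the Tikhonov minimizer with α = δ^(2−μ) satisfies ‖u_α(ỹ) − u†‖ ≤ C δ^(ν/(1+ν)). -/
/-!
Testing the minimality of `uα` against `u†` gives `‖Luα − ỹ‖² + α‖uα‖² ≤ δ² + α‖u†‖²`, and the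
variational inequality at `u = u† − uα` turns `‖uα − u†‖²` into `‖uα‖² − ‖u†‖²` plus
`β‖L(uα − u†)‖^μ + γ‖uα − u†‖²`. The residual `t = ‖Luα − ỹ‖` enters once with the good sign
(`−t²/α`) and once through `β(t + δ)^μ ≤ βt^μ + βδ^μ`; Young's inequality absorbs `βt^μ` into
`t²/α`, leaving `(1 − γ)‖uα − u†‖² ≤ δ²/α + βδ^μ + β^(2/(2−μ)) α^(μ/(2−μ))`.
The choice `α = δ^(2−μ)` balances every term at `δ^μ = (δ^(ν/(1+ν)))²`.
-/

namespace Real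

theorem mul_rpow_le_sq_div_add {β t α μ : ℝ} (hβ : 0 ≤ β) (ht : 0 ≤ t) (hα : 0 < α)
    (hμ0 : 0 ≤ μ) (hμ2 : μ < 2) :
    β * t ^ μ ≤ t ^ 2 / α + β ^ (2 / (2 - μ)) * α ^ (μ / (2 - μ)) := by
  have h2μ : 0 < 2 - μ := by linarith
  rcases le_or_gt (t ^ (2 - μ)) (β * α) with hsmall | hlarge
  · have ht_pow : t ^ μ ≤ (β * α) ^ (μ / (2 - μ)) := by
      calc t ^ μ = (t ^ (2 - μ)) ^ (μ / (2 - μ)) := by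
            rw [← rpow_mul ht]; congr 1; field_simp
        _ ≤ (β * α) ^ (μ / (2 - μ)) := by gcongr
    have hβ_pow : β * β ^ (μ / (2 - μ)) = β ^ (2 / (2 - μ)) := by
      rw [← rpow_one_add' hβ (by positivity)]
      congr 1; field_simp; ring
    calc β * t ^ μ ≤ β * (β * α) ^ (μ / (2 - μ)) := by gcongr
      _ = β ^ (2 / (2 - μ)) * α ^ (μ / (2 - μ)) := by
          rw [mul_rpow hβ hα.le, ← mul_assoc, hβ_pow]
      _ ≤ _ := le_add_of_nonneg_left (by positivity)
  · have ht_sq : t ^ 2 = t ^ μ * t ^ (2 - μ) := by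
      rw [← rpow_add' ht (by norm_num), add_sub_cancel, rpow_two]
    have : β * t ^ μ ≤ t ^ 2 / α := by
      rw [le_div_iff₀ hα, ht_sq]
      calc β * t ^ μ * α = t ^ μ * (β * α) := by ring
        _ ≤ t ^ μ * t ^ (2 - μ) := by gcongr
    exact le_add_of_le_of_nonneg this (by positivity)

end Real

section Tikhonov

variable {U V : Type*} [NormedAddCommGroup U] [InnerProductSpace ℝ U]
  [NormedAddCommGroup V] [InnerProductSpace ℝ V]

theorem sq_norm_sub_le_of_variational_inequality (L : U →L[ℝ] V) (udag : U) {μ β γ : ℝ}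
    (hvi : ∀ u : U, 2 * (inner ℝ udag u : ℝ) ≤ β * ‖L u‖ ^ μ + γ * ‖u‖ ^ 2) (u : U) :
    (1 - γ) * ‖u - udag‖ ^ 2 ≤ ‖u‖ ^ 2 - ‖udag‖ ^ 2 + β * ‖L u - L udag‖ ^ μ := by
  have h := hvi (udag - u)
  rw [inner_sub_right, real_inner_self_eq_norm_sq, real_inner_comm, norm_sub_rev,
    map_sub, norm_sub_rev (L udag)] at h
  nlinarith [norm_sub_sq_real u udag]

theorem tikhonov_error_sq_le (L : U →L[ℝ] V) (udag : U) {μ β γ δ α : ℝ}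
    (hμ0 : 0 ≤ μ) (hμ1 : μ ≤ 1) (hβ : 0 ≤ β) (hδ : 0 ≤ δ) (hα : 0 < α)
    (hvi : ∀ u : U, 2 * (inner ℝ udag u : ℝ) ≤ β * ‖L u‖ ^ μ + γ * ‖u‖ ^ 2)
    {ytil : V} (hy : ‖ytil - L udag‖ ≤ δ) {uα : U}
    (hmin : ∀ u : U, ‖L uα - ytil‖ ^ 2 + α * ‖uα‖ ^ 2 ≤ ‖L u - ytil‖ ^ 2 + α * ‖u‖ ^ 2) :
    (1 - γ) * ‖uα - udag‖ ^ 2 ≤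
      δ ^ 2 / α + β * δ ^ μ + β ^ (2 / (2 - μ)) * α ^ (μ / (2 - μ)) := by
  set t := ‖L uα - ytil‖
  have ht : 0 ≤ t := norm_nonneg _
  have hnorm_sq : ‖uα‖ ^ 2 - ‖udag‖ ^ 2 ≤ δ ^ 2 / α - t ^ 2 / α := by
    have h := hmin udag
    have hres : ‖L udag - ytil‖ ^ 2 ≤ δ ^ 2 := by
      rw [norm_sub_rev]; gcongr
    rw [← sub_div, le_div_iff₀ hα]
    nlinarith
  have hdata : ‖L uα - L udag‖ ^ μ ≤ t ^ μ + δ ^ μ :=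
    calc ‖L uα - L udag‖ ^ μ ≤ (t + δ) ^ μ := by
          gcongr
          exact (norm_sub_le_norm_sub_add_norm_sub _ ytil _).trans (by gcongr)
      _ ≤ t ^ μ + δ ^ μ := Real.rpow_add_le_add_rpow ht hδ hμ0 hμ1
  have hyoung := Real.mul_rpow_le_sq_div_add hβ ht hα hμ0 (by linarith)
  have hvi' := sq_norm_sub_le_of_variational_inequality L udag hvi uα
  nlinarith [mul_le_mul_of_nonneg_left hdata hβ]

end Tikhonov

theorem stmt14_general {U V : Type*} [NormedAddCommGroup U] [InnerProductSpace ℝ U]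
    [NormedAddCommGroup V] [InnerProductSpace ℝ V]
    (L : U →L[ℝ] V) (udag : U) (ν β γ : ℝ)
    (hν0 : 0 < ν) (hν1 : ν ≤ 1) (hβ : 0 ≤ β) (hγ1 : γ < 1)
    (hvi : ∀ u : U, 2 * (inner ℝ udag u : ℝ) ≤
      β * ‖L u‖ ^ (2 * ν / (1 + ν)) + γ * ‖u‖ ^ 2) :
    ∃ C : ℝ, 0 < C ∧ ∀ δ : ℝ, 0 < δ → ∀ ytil : V, ‖ytil - L udag‖ ≤ δ →
      ∀ uα : U,
        (∀ u : U, ‖L uα - ytil‖ ^ 2 + δ ^ (2 - 2 * ν / (1 + ν)) * ‖uα‖ ^ 2 ≤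
          ‖L u - ytil‖ ^ 2 + δ ^ (2 - 2 * ν / (1 + ν)) * ‖u‖ ^ 2) →
        ‖uα - udag‖ ≤ C * δ ^ (ν / (1 + ν)) := by
  set μ := 2 * ν / (1 + ν) with hμ
  have hμ0 : 0 ≤ μ := by positivity
  have hμ1 : μ ≤ 1 := by rw [hμ, div_le_one (by linarith)]; linarith
  set K := 1 + β + β ^ (2 / (2 - μ))
  have hγ : 0 < 1 - γ := by linarith
  refine ⟨Real.sqrt (K / (1 - γ)), Real.sqrt_pos.mpr (by positivity), ?_⟩
  intro δ hδ ytil hy uα hmin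
  have hbound := tikhonov_error_sq_le L udag hμ0 hμ1 hβ hδ.le (by positivity) hvi hy hmin
  have hδ_sq : δ ^ 2 / δ ^ (2 - μ) = δ ^ μ := by
    rw [← Real.rpow_two, ← Real.rpow_sub hδ, sub_sub_cancel]
  have hδ_pow : (δ ^ (2 - μ)) ^ (μ / (2 - μ)) = δ ^ μ := by
    rw [← Real.rpow_mul hδ.le, mul_div_cancel₀ _ (by linarith)]
  have hδ_half : δ ^ μ = (δ ^ (ν / (1 + ν))) ^ 2 := by
    rw [← Real.rpow_two, ← Real.rpow_mul hδ.le, hμ]; ring_nf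
  rw [hδ_sq, hδ_pow, hδ_half] at hbound
  refine le_of_pow_le_pow_left₀ two_ne_zero (by positivity) ?_
  rw [mul_pow, Real.sq_sqrt (by positivity), div_mul_eq_mul_div, le_div_iff₀ hγ]
  linarith

/-- Under the inhomogeneous variational inequality with parameter
`μ = 2ν/(1+ν)` for some `ν ∈ (0,1]` (i.e. `2⟨u†,u⟩ ≤ β‖Lu‖^μ + γ‖u‖²` with `γ ∈ (0,1)`),
there exists `C > 0` such that for all `δ > 0` and all `ỹ ∈ V` with `‖ỹ − Lu†‖ ≤ δ`,
the Tikhonov minimizer with `α = δ^(2−μ)` satisfies `‖u_α(ỹ) − u†‖ ≤ C δ^(ν/(1+ν))`. -/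
theorem stmt14 {U V : Type*} [NormedAddCommGroup U] [InnerProductSpace ℝ U]
    [NormedAddCommGroup V] [InnerProductSpace ℝ V]
    (L : U →L[ℝ] V) (udag : U) (ν β γ : ℝ)
    (hν0 : 0 < ν) (hν1 : ν ≤ 1) (hβ : 0 ≤ β) (hγ0 : 0 < γ) (hγ1 : γ < 1)
    (hvi : ∀ u : U, 2 * (inner ℝ udag u : ℝ) ≤
      β * ‖L u‖ ^ (2 * ν / (1 + ν)) + γ * ‖u‖ ^ 2) :
    ∃ C : ℝ, 0 < C ∧ ∀ δ : ℝ, 0 < δ → ∀ ytil : V, ‖ytil - L udag‖ ≤ δ →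
      ∀ uα : U,
        (∀ u : U, ‖L uα - ytil‖ ^ 2 + δ ^ (2 - 2 * ν / (1 + ν)) * ‖uα‖ ^ 2 ≤
          ‖L u - ytil‖ ^ 2 + δ ^ (2 - 2 * ν / (1 + ν)) * ‖u‖ ^ 2) →
        ‖uα - udag‖ ≤ C * δ ^ (ν / (1 + ν)) :=
  stmt14_general L udag ν β γ hν0 hν1 hβ hγ1 hvi
end

section
/- Let U = ℓ²(ℕ) with orthonormal basis (φₙ), L φₙ = n^(−1/2) φₙ, u† = Σₙ n^(−1) φₙ. For N ≥ 1 set u_N = N^(−1) Σ_{n ≤ N} φₙ. Then 2⟨u†, u_N⟩ / (‖L u_N‖ + ‖u_N‖²) ≥ H_N^(1/2) where H_N = Σ_{n ≤ N} n^(−1); consequently there are no constants β ≥ 0, γ ∈ [0,1) with 2⟨u†,u⟩ ≤ β‖Lu‖ + γ‖u‖² for all u ∈ U. -/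
/-!
Write `H_N = ∑_{n ≤ N} n⁻¹`. Orthonormality gives `⟨u†, u_N⟩ = H_N / N`, `‖u_N‖² = 1 / N` and
`‖L u_N‖ = √H_N / N`, so the quotient equals `2 H_N / (√H_N + 1)`, which is at least `√H_N` as
`H_N ≥ 1`. Testing the variational inequality on `u_N` gives `2 H_N ≤ β √H_N + γ`, which fails
once `H_N` is large, since the harmonic series diverges.
-/

open Finset Filter

section Orthonormal

variable {ι 𝕜 E : Type*} [RCLike 𝕜] [NormedAddCommGroup E] [InnerProductSpace 𝕜 E]
  {v : ι → E}

theorem Orthonormal.inner_right_of_hasSum (hv : Orthonormal 𝕜 v) {c : ι → 𝕜} {x : E}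
    (hx : HasSum (fun i => c i • v i) x) (k : ι) : inner 𝕜 (v k) x = c k := by
  have hk : HasSum (fun i => inner 𝕜 (v k) (c i • v i)) (c k) := by
    convert hasSum_single (f := fun i => inner 𝕜 (v k) (c i • v i)) k fun i hi => ?_ using 1
    · simp [inner_smul_right, hv.1 k]
    · simp [inner_smul_right, hv.2 (Ne.symm hi)]
  exact ((innerSL 𝕜 (v k)).hasSum hx).unique hk

theorem Orthonormal.norm_sum_smul_sq (hv : Orthonormal 𝕜 v) (c : ι → 𝕜) (s : Finset ι) :
    ‖∑ i ∈ s, c i • v i‖ ^ 2 = ∑ i ∈ s, ‖c i‖ ^ 2 := by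
  simpa using hv.orthogonalFamily.norm_sum c s

end Orthonormal

section Average

variable {E : Type*} [NormedAddCommGroup E] [InnerProductSpace ℝ E] {φ : ℕ → E}

theorem inner_smul_sum_range_of_hasSum_inv_succ (hφ : Orthonormal ℝ φ) {x : E}
    (hx : HasSum (fun n : ℕ => ((n : ℝ) + 1)⁻¹ • φ n) x) (N : ℕ) :
    inner ℝ x ((N : ℝ)⁻¹ • ∑ n ∈ range N, φ n) = (N : ℝ)⁻¹ * ∑ n ∈ range N, ((n : ℝ) + 1)⁻¹ := by
  simp only [inner_smul_right, inner_sum, fun n => real_inner_comm (φ n) x,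
    hφ.inner_right_of_hasSum hx]

theorem norm_smul_sum_range_sq (hφ : Orthonormal ℝ φ) (N : ℕ) :
    ‖(N : ℝ)⁻¹ • ∑ n ∈ range N, φ n‖ ^ 2 = (N : ℝ)⁻¹ := by
  rw [smul_sum, hφ.norm_sum_smul_sq (fun _ => (N : ℝ)⁻¹), sum_const, card_range, nsmul_eq_mul,
    norm_inv, RCLike.norm_natCast]
  rcases N.eq_zero_or_pos with rfl | hN
  · simp
  · field_simp

theorem Real.rpow_neg_one_half_sq {x : ℝ} (hx : 0 ≤ x) : (x ^ (-(1 : ℝ) / 2)) ^ 2 = x⁻¹ := by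
  rw [← Real.rpow_natCast, ← Real.rpow_mul hx]
  norm_num [Real.rpow_neg_one]

theorem norm_apply_smul_sum_range (hφ : Orthonormal ℝ φ) {L : E →L[ℝ] E}
    (hL : ∀ n : ℕ, L (φ n) = ((n : ℝ) + 1) ^ (-(1 : ℝ) / 2) • φ n) (N : ℕ) :
    ‖L ((N : ℝ)⁻¹ • ∑ n ∈ range N, φ n)‖ =
      (N : ℝ)⁻¹ * √(∑ n ∈ range N, ((n : ℝ) + 1)⁻¹) := by
  have hLu : L ((N : ℝ)⁻¹ • ∑ n ∈ range N, φ n) =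
      ∑ n ∈ range N, ((N : ℝ)⁻¹ * ((n : ℝ) + 1) ^ (-(1 : ℝ) / 2)) • φ n := by
    simp only [map_smul, map_sum, hL, smul_sum, smul_smul]
  have hsq : ‖L ((N : ℝ)⁻¹ • ∑ n ∈ range N, φ n)‖ ^ 2 =
      ((N : ℝ)⁻¹) ^ 2 * ∑ n ∈ range N, ((n : ℝ) + 1)⁻¹ := by
    simp only [hLu, hφ.norm_sum_smul_sq, Real.norm_eq_abs, sq_abs, mul_pow, mul_sum,
      Real.rpow_neg_one_half_sq (Nat.cast_add_one_pos _).le]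
  rw [← Real.sqrt_sq (norm_nonneg _), hsq, Real.sqrt_mul (by positivity),
    Real.sqrt_sq (by positivity)]

end Average

theorem one_le_sum_range_inv_succ {N : ℕ} (hN : 1 ≤ N) :
    1 ≤ ∑ n ∈ range N, ((n : ℝ) + 1)⁻¹ := by
  simpa using single_le_sum (f := fun n : ℕ => ((n : ℝ) + 1)⁻¹) (fun n _ => by positivity)
    (mem_range.2 hN)

theorem tendsto_sum_range_inv_succ_atTop :
    Tendsto (fun N => ∑ n ∈ range N, ((n : ℝ) + 1)⁻¹) atTop atTop := by
  simpa only [one_div] using Real.tendsto_sum_range_one_div_nat_succ_atTop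

theorem Real.sqrt_le_two_mul_div_sqrt_add_one {x : ℝ} (hx : 1 ≤ x) :
    √x ≤ 2 * x / (√x + 1) := by
  have hs : 1 ≤ √x := Real.one_le_sqrt.2 hx
  have hsq : √x ^ 2 = x := Real.sq_sqrt (by linarith)
  rw [le_div_iff₀ (by positivity)]
  nlinarith

theorem Real.eventually_mul_sqrt_add_lt_two_mul {β γ : ℝ} (hβ : 0 ≤ β) (hγ : 0 ≤ γ) :
    ∀ᶠ x in atTop, β * √x + γ < 2 * x := by
  filter_upwards [eventually_ge_atTop ((β + γ + 1) ^ 2)] with x hx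
  have hs : β + γ + 1 ≤ √x := Real.le_sqrt_of_sq_le hx
  have hsq : √x ^ 2 = x := Real.sq_sqrt (by nlinarith)
  nlinarith

theorem stmt19_general {U : Type*} [NormedAddCommGroup U] [InnerProductSpace ℝ U]
    (φ : HilbertBasis ℕ ℝ U) (L : U →L[ℝ] U)
    (hL : ∀ n : ℕ, L (φ n) = (((n : ℝ) + 1) ^ (-(1 : ℝ) / 2)) • φ n)
    (udag : U)
    (hu : HasSum (fun n : ℕ => (((n : ℝ) + 1)⁻¹) • φ n) udag) :
    (∀ N : ℕ, 1 ≤ N → ∀ uN : U, uN = ((N : ℝ)⁻¹) • ∑ n ∈ Finset.range N, φ n →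
      Real.sqrt (∑ n ∈ Finset.range N, ((n : ℝ) + 1)⁻¹) ≤
        2 * (inner ℝ udag uN : ℝ) / (‖L uN‖ + ‖uN‖ ^ 2)) ∧
      ¬ ∃ β γ : ℝ, 0 ≤ β ∧ 0 ≤ γ ∧ γ < 1 ∧
        ∀ u : U, 2 * (inner ℝ udag u : ℝ) ≤ β * ‖L u‖ + γ * ‖u‖ ^ 2 := by
  have hφ := φ.orthonormal
  constructor
  · rintro N hN uN rfl
    have hN' : (N : ℝ)⁻¹ ≠ 0 := by positivity
    rw [inner_smul_sum_range_of_hasSum_inv_succ hφ hu, norm_apply_smul_sum_range hφ hL,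
      norm_smul_sum_range_sq hφ, ← mul_add_one, mul_left_comm, mul_div_mul_left _ _ hN']
    exact Real.sqrt_le_two_mul_div_sqrt_add_one (one_le_sum_range_inv_succ hN)
  · rintro ⟨β, γ, hβ, hγ, -, hineq⟩
    obtain ⟨N, hlt, hN⟩ := ((tendsto_sum_range_inv_succ_atTop.eventually
      (Real.eventually_mul_sqrt_add_lt_two_mul hβ hγ)).and (eventually_ge_atTop 1)).exists
    have hle := hineq ((N : ℝ)⁻¹ • ∑ n ∈ range N, φ n)
    rw [inner_smul_sum_range_of_hasSum_inv_succ hφ hu, norm_apply_smul_sum_range hφ hL,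
      norm_smul_sum_range_sq hφ] at hle
    have hN' : (0 : ℝ) < (N : ℝ)⁻¹ := by positivity
    exact hlt.not_ge (le_of_mul_le_mul_left (by linarith) hN')

/-- Let `U = ℓ²(ℕ)` with orthonormal basis `(φₙ)ₙ≥1`,
`L φₙ = n^(−1/2) φₙ`, `u† = Σₙ n^(−1) φₙ`. For `N ≥ 1` set `u_N = N^(−1) Σ_{n ≤ N} φₙ`.
Then `2⟨u†, u_N⟩ / (‖L u_N‖ + ‖u_N‖²) ≥ H_N^(1/2)` where `H_N = Σ_{n ≤ N} n^(−1)`;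
consequently there are no constants `β ≥ 0`, `γ ∈ [0,1)` with
`2⟨u†,u⟩ ≤ β‖Lu‖ + γ‖u‖²` for all `u ∈ U`.
(Lean index `n : ℕ` corresponds to the paper's `n + 1 ≥ 1`.) -/
theorem stmt19 {U : Type*} [NormedAddCommGroup U] [InnerProductSpace ℝ U] [CompleteSpace U]
    (φ : HilbertBasis ℕ ℝ U) (L : U →L[ℝ] U)
    (hL : ∀ n : ℕ, L (φ n) = (((n : ℝ) + 1) ^ (-(1 : ℝ) / 2)) • φ n)
    (udag : U)
    (hu : HasSum (fun n : ℕ => (((n : ℝ) + 1)⁻¹) • φ n) udag) :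
    (∀ N : ℕ, 1 ≤ N → ∀ uN : U, uN = ((N : ℝ)⁻¹) • ∑ n ∈ Finset.range N, φ n →
      Real.sqrt (∑ n ∈ Finset.range N, ((n : ℝ) + 1)⁻¹) ≤
        2 * (inner ℝ udag uN : ℝ) / (‖L uN‖ + ‖uN‖ ^ 2)) ∧
      ¬ ∃ β γ : ℝ, 0 ≤ β ∧ 0 ≤ γ ∧ γ < 1 ∧
        ∀ u : U, 2 * (inner ℝ udag u : ℝ) ≤ β * ‖L u‖ + γ * ‖u‖ ^ 2 :=
  stmt19_general φ L hL udag hu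
end
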